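/- arXiv:1510.07694 — 2 statements merged into one kernel-verified Lean document; each statement's English description precedes it below -/
import Mathlib

section
/- (Theorem 3.1, part) Let v ∈ ℝ^{N²} have all entries nonnegative. If τ > 0 and τ/h² < 1/(2·max{1, max_{i=1,…,N²} v_i}), then the matrices I + (τ/2)·P·D(v) and I + (τ/2)·R·D(v) are nonsingular and all of their entries are nonnegative. -/
open Matrix Kronecker
open scoped Matrix.Norms.L2Operator

/-- The `N × N` symmetric tridiagonal matrix with main-diagonal entries `-2/h²` and
sub- and superdiagonal entries `1/h²`. -/
noncomputable def tridT (N : ℕ) (h : ℝ) : Matrix (Fin N) (Fin N) ℝ :=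
  Matrix.of fun i j =>
    if i = j then -2 / h ^ 2
    else if (i : ℕ) + 1 = (j : ℕ) ∨ (j : ℕ) + 1 = (i : ℕ) then 1 / h ^ 2
    else 0

/-- `P = I_N ⊗ T`, an `N² × N²` matrix. -/
noncomputable def Pmat (N : ℕ) (h : ℝ) : Matrix (Fin N × Fin N) (Fin N × Fin N) ℝ :=
  (1 : Matrix (Fin N) (Fin N) ℝ) ⊗ₖ tridT N h

/-- `R = T ⊗ I_N`, an `N² × N²` matrix. -/
noncomputable def Rmat (N : ℕ) (h : ℝ) : Matrix (Fin N × Fin N) (Fin N × Fin N) ℝ :=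
  tridT N h ⊗ₖ (1 : Matrix (Fin N) (Fin N) ℝ)

lemma tridT_diag (N : ℕ) (h : ℝ) (b : Fin N) : tridT N h b b = -2 / h ^ 2 := by
  simp [tridT]

lemma tridT_off_nonneg (N : ℕ) {h : ℝ} (hh : 0 < h) {b d : Fin N} (hbd : b ≠ d) :
    0 ≤ tridT N h b d := by
  simp only [tridT, Matrix.of_apply, if_neg hbd]
  split
  · positivity
  · exact le_refl 0

lemma sum_ite_le {α : Type*} [Fintype α] (c : ℝ) (hc : 0 ≤ c) (p : α → Prop) [DecidablePred p]
    (hp : ∀ a b, p a → p b → a = b) :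
    ∑ d, (if p d then c else 0) ≤ c := by
  classical
  rw [← Finset.sum_filter, Finset.sum_const, nsmul_eq_mul]
  have hcard : (Finset.univ.filter p).card ≤ 1 :=
    Finset.card_le_one.mpr (by intro a ha b hb; exact hp a b (Finset.mem_filter.mp ha).2 (Finset.mem_filter.mp hb).2)
  calc ((Finset.univ.filter p).card : ℝ) * c ≤ 1 * c := by
        apply mul_le_mul_of_nonneg_right _ hc
        exact_mod_cast hcard
    _ = c := one_mul c

lemma tridT_row_sum (N : ℕ) {h : ℝ} (hh : 0 < h) (b : Fin N) :
    ∑ d ∈ Finset.univ.erase b, tridT N h b d ≤ 2 / h ^ 2 := by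
  have hc : (0:ℝ) ≤ 1 / h ^ 2 := by positivity
  have step : ∀ d ∈ Finset.univ.erase b, tridT N h b d ≤
      (if (b : ℕ) + 1 = (d : ℕ) then 1 / h ^ 2 else 0) +
      (if (d : ℕ) + 1 = (b : ℕ) then 1 / h ^ 2 else 0) := by
    intro d hd
    have hbd : b ≠ d := (Finset.ne_of_mem_erase hd).symm
    simp only [tridT, Matrix.of_apply, if_neg hbd]
    split_ifs with h1 h2 h3 h4 h5 <;> first | linarith | tauto
  calc ∑ d ∈ Finset.univ.erase b, tridT N h b d
      ≤ ∑ d ∈ Finset.univ.erase b,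
        ((if (b : ℕ) + 1 = (d : ℕ) then 1 / h ^ 2 else 0) +
         (if (d : ℕ) + 1 = (b : ℕ) then 1 / h ^ 2 else 0)) := Finset.sum_le_sum step
    _ ≤ ∑ d : Fin N,
        ((if (b : ℕ) + 1 = (d : ℕ) then 1 / h ^ 2 else 0) +
         (if (d : ℕ) + 1 = (b : ℕ) then 1 / h ^ 2 else 0)) := by
        apply Finset.sum_le_sum_of_subset_of_nonneg (Finset.erase_subset _ _)
        intro i _ _
        split_ifs <;> simp [hc] <;> positivity
    _ = (∑ d : Fin N, if (b : ℕ) + 1 = (d : ℕ) then 1 / h ^ 2 else 0) +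
        (∑ d : Fin N, if (d : ℕ) + 1 = (b : ℕ) then 1 / h ^ 2 else 0) := Finset.sum_add_distrib
    _ ≤ 1 / h ^ 2 + 1 / h ^ 2 := by
        gcongr
        · exact sum_ite_le _ hc _ (fun a c ha hc' => Fin.ext (by omega))
        · exact sum_ite_le _ hc _ (fun a c ha hc' => Fin.ext (by omega))
    _ = 2 / h ^ 2 := by ring

lemma key (N : ℕ) (hN : 1 ≤ N) {h : ℝ} (hh : 0 < h)
    (v : Fin N × Fin N → ℝ) (hv : ∀ i, 0 ≤ v i)
    (τ : ℝ) (hτ0 : 0 < τ) (hτ : τ / h ^ 2 < 1 / (2 * max 1 (⨆ i, v i)))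
    (A : Matrix (Fin N × Fin N) (Fin N × Fin N) ℝ)
    (hAd : ∀ k, A k k = -2 / h ^ 2)
    (hAoff : ∀ k j, k ≠ j → 0 ≤ A k j)
    (hArow : ∀ k, ∑ j ∈ Finset.univ.erase k, A k j ≤ 2 / h ^ 2) :
    IsUnit (1 + (τ / 2) • (A * Matrix.diagonal v)) ∧
      ∀ i j, 0 ≤ (1 + (τ / 2) • (A * Matrix.diagonal v)) i j := by
  have hNe : Nonempty (Fin N × Fin N) := ⟨(⟨0, hN⟩, ⟨0, hN⟩)⟩
  set V : ℝ := max 1 (⨆ i, v i) with hV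
  have hV1 : (1:ℝ) ≤ V := le_max_left _ _
  have hV0 : (0:ℝ) < V := lt_of_lt_of_le one_pos hV1
  have hvV : ∀ j, v j ≤ V := fun j =>
    le_max_of_le_right (le_ciSup (Set.Finite.bddAbove (Set.finite_range v)) j)
  have hτh : 0 < τ / h ^ 2 := by positivity
  have hτV : τ / h ^ 2 * V < 1 / 2 := by
    have := mul_lt_mul_of_pos_right hτ hV0
    rwa [show 1 / (2 * V) * V = 1 / 2 by field_simp] at this
  set M := 1 + (τ / 2) • (A * Matrix.diagonal v) with hM
  have hMentry : ∀ i j, M i j = (if i = j then (1:ℝ) else 0) + (τ / 2) * (A i j * v j) := by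
    intro i j
    simp [hM, Matrix.add_apply, Matrix.one_apply, Matrix.smul_apply, Matrix.mul_diagonal,
      smul_eq_mul]
  have hdiag : ∀ k, 1 / 2 < M k k := by
    intro k
    rw [hMentry k k, if_pos rfl, hAd k]
    have h1 : τ / h ^ 2 * v k ≤ τ / h ^ 2 * V := by
      exact mul_le_mul_of_nonneg_left (hvV k) (le_of_lt hτh)
    have h2 : τ / 2 * (-2 / h ^ 2 * v k) = -(τ / h ^ 2 * v k) := by
      field_simp
    rw [h2]
    linarith
  have hoffnn : ∀ k j, k ≠ j → 0 ≤ M k j := by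
    intro k j hkj
    rw [hMentry k j, if_neg hkj]
    have := hAoff k j hkj
    have := hv j
    positivity
  have hnn : ∀ i j, 0 ≤ M i j := by
    intro i j
    by_cases hij : i = j
    · subst hij; linarith [hdiag i]
    · exact hoffnn i j hij
  refine ⟨?_, hnn⟩
  have hdom : ∀ k, ∑ j ∈ Finset.univ.erase k, ‖M k j‖ < ‖M k k‖ := by
    intro k
    have hsum : ∑ j ∈ Finset.univ.erase k, ‖M k j‖ ≤ τ / h ^ 2 * V := by
      calc ∑ j ∈ Finset.univ.erase k, ‖M k j‖
          = ∑ j ∈ Finset.univ.erase k, M k j := by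
            refine Finset.sum_congr rfl fun j hj => ?_
            exact Real.norm_of_nonneg (hoffnn k j (Finset.ne_of_mem_erase hj).symm)
        _ ≤ ∑ j ∈ Finset.univ.erase k, (τ / 2) * (A k j * V) := by
            refine Finset.sum_le_sum fun j hj => ?_
            have hkj : k ≠ j := (Finset.ne_of_mem_erase hj).symm
            rw [hMentry k j, if_neg hkj, zero_add]
            have hA0 := hAoff k j hkj
            exact mul_le_mul_of_nonneg_left (mul_le_mul_of_nonneg_left (hvV j) hA0)
              (by positivity)
        _ = (τ / 2) * V * ∑ j ∈ Finset.univ.erase k, A k j := by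
            rw [Finset.mul_sum]; exact Finset.sum_congr rfl fun j _ => by ring
        _ ≤ (τ / 2) * V * (2 / h ^ 2) := by
            apply mul_le_mul_of_nonneg_left (hArow k)
            positivity
        _ = τ / h ^ 2 * V := by field_simp; try ring
    have hMkk : ‖M k k‖ = M k k := Real.norm_of_nonneg (hnn k k)
    rw [hMkk]
    calc ∑ j ∈ Finset.univ.erase k, ‖M k j‖ ≤ τ / h ^ 2 * V := hsum
      _ < 1 / 2 := hτV
      _ < M k k := hdiag k
  have hdet : M.det ≠ 0 := det_ne_zero_of_sum_row_lt_diag hdom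
  exact (Matrix.isUnit_iff_isUnit_det M).mpr (isUnit_iff_ne_zero.mpr hdet)

/-- (Theorem 3.1, part) If `v ≥ 0` entrywise, `τ > 0` and
`τ/h² < 1/(2·max{1, maxᵢ vᵢ})`, then `I + (τ/2)·P·D(v)` and `I + (τ/2)·R·D(v)` are
nonsingular and entrywise nonnegative. -/
theorem stmt4 (N : ℕ) (hN : 1 ≤ N) (h : ℝ) (hh : h = 1 / (N + 1))
    (v : Fin N × Fin N → ℝ) (hv : ∀ i, 0 ≤ v i)
    (τ : ℝ) (hτ0 : 0 < τ) (hτ : τ / h ^ 2 < 1 / (2 * max 1 (⨆ i, v i))) :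
    IsUnit (1 + (τ / 2) • (Pmat N h * Matrix.diagonal v)) ∧
      (∀ i j, 0 ≤ (1 + (τ / 2) • (Pmat N h * Matrix.diagonal v)) i j) ∧
    IsUnit (1 + (τ / 2) • (Rmat N h * Matrix.diagonal v)) ∧
      (∀ i j, 0 ≤ (1 + (τ / 2) • (Rmat N h * Matrix.diagonal v)) i j) := by
  have hh0 : 0 < h := by rw [hh]; positivity
  -- facts about Pmat
  have hPdiag : ∀ k, Pmat N h k k = -2 / h ^ 2 := by
    intro k
    simp [Pmat, Matrix.kroneckerMap_apply, Matrix.one_apply, tridT_diag]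
  have hPoff : ∀ k j, k ≠ j → 0 ≤ Pmat N h k j := by
    rintro ⟨a, b⟩ ⟨c, d⟩ hkj
    by_cases hac : a = c
    · subst hac
      have hbd : b ≠ d := fun hbd => hkj (by rw [hbd])
      simpa [Pmat, Matrix.kroneckerMap_apply, Matrix.one_apply] using
        tridT_off_nonneg N hh0 hbd
    · simp [Pmat, Matrix.kroneckerMap_apply, Matrix.one_apply, hac]
  have hPall : ∀ a b, ∑ j : Fin N × Fin N, Pmat N h (a, b) j = ∑ d, tridT N h b d := by
    intro a b
    rw [Fintype.sum_prod_type]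
    simp [Pmat, Matrix.one_apply, ite_mul, Finset.sum_ite_eq]
  have hProw : ∀ k, ∑ j ∈ Finset.univ.erase k, Pmat N h k j ≤ 2 / h ^ 2 := by
    rintro ⟨a, b⟩
    rw [Finset.sum_erase_eq_sub (Finset.mem_univ _), hPall, hPdiag]
    have hT := tridT_row_sum N hh0 b
    rw [Finset.sum_erase_eq_sub (Finset.mem_univ b), tridT_diag] at hT
    linarith
  -- facts about Rmat
  have hRdiag : ∀ k, Rmat N h k k = -2 / h ^ 2 := by
    intro k
    simp [Rmat, Matrix.kroneckerMap_apply, Matrix.one_apply, tridT_diag]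
  have hRoff : ∀ k j, k ≠ j → 0 ≤ Rmat N h k j := by
    rintro ⟨a, b⟩ ⟨c, d⟩ hkj
    by_cases hbd : b = d
    · subst hbd
      have hac : a ≠ c := fun hac => hkj (by rw [hac])
      simpa [Rmat, Matrix.kroneckerMap_apply, Matrix.one_apply] using
        tridT_off_nonneg N hh0 hac
    · simp [Rmat, Matrix.kroneckerMap_apply, Matrix.one_apply, hbd]
  have hRall : ∀ a b, ∑ j : Fin N × Fin N, Rmat N h (a, b) j = ∑ c, tridT N h a c := by
    intro a b
    rw [Fintype.sum_prod_type]
    simp [Rmat, Matrix.one_apply, mul_ite, Finset.sum_ite_eq]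
  have hRrow : ∀ k, ∑ j ∈ Finset.univ.erase k, Rmat N h k j ≤ 2 / h ^ 2 := by
    rintro ⟨a, b⟩
    rw [Finset.sum_erase_eq_sub (Finset.mem_univ _), hRall, hRdiag]
    have hT := tridT_row_sum N hh0 a
    rw [Finset.sum_erase_eq_sub (Finset.mem_univ a), tridT_diag] at hT
    linarith
  obtain ⟨hP1, hP2⟩ := key N hN hh0 v hv τ hτ0 hτ (Pmat N h) hPdiag hPoff hProw
  obtain ⟨hR1, hR2⟩ := key N hN hh0 v hv τ hτ0 hτ (Rmat N h) hRdiag hRoff hRrow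
  exact ⟨hP1, hP2, hR1, hR2⟩
end

section
/- (Theorem 3.1, part) Let v ∈ ℝ^{N²} have all entries nonnegative. If τ > 0 and τ/h² < 1/(2·max{1, max_{i=1,…,N²} v_i}), then the matrices I - (τ/2)·P·D(v) and I - (τ/2)·R·D(v) are nonsingular and inverse positive, i.e. every entry of their inverses is nonnegative. -/
open Matrix Kronecker
open scoped Matrix.Norms.L2Operator

section AuxNorm

attribute [local instance 2000] Matrix.linftyOpNormedAddCommGroup Matrix.linftyOpNormedRing
  Matrix.linftyOpNormedAlgebra

variable {n : Type*} [Fintype n] [DecidableEq n]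

lemma entry_nnnorm_le_aux (A : Matrix n n ℝ) (i j : n) : ‖A i j‖₊ ≤ ‖A‖₊ := by
  rw [Matrix.linfty_opNNNorm_def]
  exact le_trans
    (Finset.single_le_sum (f := fun j' => ‖A i j'‖₊) (fun _ _ => zero_le) (Finset.mem_univ j))
    (Finset.le_sup (f := fun i' => ∑ j' : n, ‖A i' j'‖₊) (Finset.mem_univ i))

lemma norm_le_of_row_aux (A : Matrix n n ℝ) (r : ℝ) (hr : 0 ≤ r)
    (hA : ∀ i, ∑ j, |A i j| ≤ r) : ‖A‖ ≤ r := by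
  rw [Matrix.linfty_opNorm_def, ← NNReal.coe_mk r hr, NNReal.coe_le_coe]
  refine Finset.sup_le fun i _ => ?_
  rw [← NNReal.coe_le_coe, NNReal.coe_mk, NNReal.coe_sum]
  simpa [Real.norm_eq_abs] using hA i

omit [DecidableEq n] in
lemma mul_entry_nonneg_aux {A B : Matrix n n ℝ} (hA : ∀ i j, 0 ≤ A i j)
    (hB : ∀ i j, 0 ≤ B i j) : ∀ i j, 0 ≤ (A * B) i j := fun i j =>
  Finset.sum_nonneg fun k _ => mul_nonneg (hA i k) (hB k j)

lemma pow_entry_nonneg_aux {A : Matrix n n ℝ} (hA : ∀ i j, 0 ≤ A i j) :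
    ∀ (k : ℕ) (i j : n), 0 ≤ (A ^ k) i j := by
  intro k
  induction k with
  | zero =>
    intro i j
    rw [pow_zero]
    by_cases hij : i = j <;> simp [Matrix.one_apply, hij]
  | succ m ih =>
    intro i j
    rw [pow_succ]
    exact mul_entry_nonneg_aux ih hA i j

lemma oneSub_key_aux (C : Matrix n n ℝ) (hC : ∀ i j, 0 ≤ C i j) (hn : ‖C‖ < 1) :
    IsUnit (1 - C) ∧ ∀ i j, 0 ≤ (1 - C)⁻¹ i j := by
  haveI : CompleteSpace (Matrix n n ℝ) :=
    FiniteDimensional.complete ℝ (Matrix n n ℝ)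
  have hU : IsUnit (1 - C) := isUnit_one_sub_of_norm_lt_one hn
  refine ⟨hU, fun i j => ?_⟩
  have hs : Summable fun k : ℕ => C ^ k := summable_geometric_of_norm_lt_one hn
  have hinv : (1 - C)⁻¹ = ∑' k : ℕ, C ^ k := by
    rw [Matrix.nonsing_inv_eq_ringInverse, ← geom_series_eq_inverse C hn]; rfl
  set φ : Matrix n n ℝ →L[ℝ] ℝ :=
    LinearMap.mkContinuous
      { toFun := fun A => A i j, map_add' := fun _ _ => rfl, map_smul' := fun _ _ => rfl }
      1 (fun A => by rw [one_mul]; exact_mod_cast entry_nnnorm_le_aux A i j) with hφ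
  have h2 : (∑' k : ℕ, C ^ k) i j = ∑' k : ℕ, (C ^ k) i j := φ.map_tsum hs
  rw [hinv, h2]
  exact tsum_nonneg fun k => pow_entry_nonneg_aux hC k i j


lemma main_aux [Nonempty n] (W : Matrix n n ℝ) (v : n → ℝ) (hv : ∀ i, 0 ≤ v i)
    (h2 : ℝ) (hh2 : 0 < h2)
    (hWd : ∀ i, -2 / h2 ≤ W i i)
    (hWo : ∀ i j, i ≠ j → 0 ≤ W i j)
    (hWr : ∀ i, ∑ j, |W i j| ≤ 4 / h2)
    (s : ℝ) (hs1 : 1 ≤ s) (hvs : ∀ i, v i ≤ s)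
    (τ : ℝ) (hτ0 : 0 < τ) (hτ : τ * s / h2 < 1 / 2) :
    IsUnit (1 - (τ / 2) • (W * Matrix.diagonal v)) ∧
      ∀ i j, 0 ≤ (1 - (τ / 2) • (W * Matrix.diagonal v))⁻¹ i j := by
  have hs0 : (0:ℝ) < s := lt_of_lt_of_le one_pos hs1
  set x : ℝ := τ * s / h2 with hx
  have hx0 : 0 < x := by positivity
  set α : ℝ := 1 + x with hα
  have hα1 : 1 ≤ α := by simp [hα]; positivity
  have hα0 : 0 < α := lt_of_lt_of_le one_pos hα1
  set A : Matrix n n ℝ := 1 - (τ / 2) • (W * Matrix.diagonal v) with hA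
  set C : Matrix n n ℝ := 1 - α⁻¹ • A with hC
  have hCapp : ∀ i j, C i j
      = (1 : Matrix n n ℝ) i j - α⁻¹ * ((1 : Matrix n n ℝ) i j - τ / 2 * (W i j * v j)) := by
    intro i j
    simp [hC, hA, Matrix.sub_apply, Matrix.smul_apply, Matrix.mul_diagonal, smul_eq_mul,
      mul_sub]
  -- entrywise nonnegativity of C
  have hCnn : ∀ i j, 0 ≤ C i j := by
    intro i j
    rw [hCapp i j]
    by_cases hij : i = j
    · subst hij
      rw [Matrix.one_apply_eq]
      have hW : -2 / h2 ≤ W i i := hWd i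
      have hkey : 1 - τ / 2 * (W i i * v i) ≤ α := by
        have h1 : -(W i i) ≤ 2 / h2 := by rw [neg_div] at hW; linarith
        have h1' : -(W i i) * v i ≤ 2 / h2 * v i :=
          mul_le_mul_of_nonneg_right h1 (hv i)
        have h2' : 2 / h2 * v i ≤ 2 / h2 * s :=
          mul_le_mul_of_nonneg_left (hvs i) (by positivity)
        have h3 : τ / 2 * (2 / h2 * s) = x := by rw [hx]; field_simp
        nlinarith
      have := mul_le_mul_of_nonneg_left hkey (inv_nonneg.mpr hα0.le)
      rw [inv_mul_cancel₀ hα0.ne'] at this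
      linarith
    · rw [Matrix.one_apply_ne hij]
      have := hWo i j hij
      have hα' : 0 ≤ α⁻¹ := inv_nonneg.mpr hα0.le
      nlinarith [mul_nonneg (mul_nonneg (by linarith : (0:ℝ) ≤ τ / 2) this) (hv j)]
  -- norm bound
  have hCdecomp : C = (1 - α⁻¹) • (1 : Matrix n n ℝ)
      + (α⁻¹ * (τ / 2)) • (W * Matrix.diagonal v) := by
    rw [hC, hA, smul_sub, sub_smul, one_smul, smul_smul]
    abel
  have hnormW : ‖W‖ ≤ 4 / h2 := norm_le_of_row_aux W _ (by positivity) hWr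
  have hnormD : ‖Matrix.diagonal v‖ ≤ s := by
    rw [Matrix.linfty_opNorm_diagonal]
    refine (pi_norm_le_iff_of_nonneg hs0.le).mpr fun i => ?_
    rw [Real.norm_eq_abs, abs_of_nonneg (hv i)]
    exact hvs i
  have hnormM : ‖W * Matrix.diagonal v‖ ≤ 4 / h2 * s :=
    le_trans (Matrix.linfty_opNorm_mul _ _)
      (mul_le_mul hnormW hnormD (norm_nonneg _) (by positivity))
  have hαinv1 : α⁻¹ ≤ 1 := by
    rw [inv_le_one_iff₀]; right; exact hα1
  have hnormC : ‖C‖ < 1 := by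
    have h41 : τ / 2 * (4 / h2 * s) = 2 * x := by rw [hx]; field_simp; ring
    calc ‖C‖ ≤ ‖(1 - α⁻¹) • (1 : Matrix n n ℝ)‖
        + ‖(α⁻¹ * (τ / 2)) • (W * Matrix.diagonal v)‖ := by
          rw [hCdecomp]; exact norm_add_le _ _
      _ = (1 - α⁻¹) * ‖(1 : Matrix n n ℝ)‖
        + α⁻¹ * (τ / 2) * ‖W * Matrix.diagonal v‖ := by
          rw [norm_smul, norm_smul, Real.norm_eq_abs, Real.norm_eq_abs,
            abs_of_nonneg (by linarith), abs_of_nonneg (by positivity)]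
      _ ≤ (1 - α⁻¹) * 1 + α⁻¹ * (τ / 2 * (4 / h2 * s)) := by
          rw [norm_one, mul_assoc]
          have : α⁻¹ * (τ / 2) * ‖W * Matrix.diagonal v‖
              ≤ α⁻¹ * (τ / 2) * (4 / h2 * s) :=
            mul_le_mul_of_nonneg_left hnormM (by positivity)
          nlinarith
      _ = 1 - α⁻¹ * (1 - 2 * x) := by rw [h41]; ring
      _ < 1 := by
          have : 0 < α⁻¹ * (1 - 2 * x) := by
            apply mul_pos (inv_pos.mpr hα0); linarith
          linarith
  obtain ⟨hU, hpos⟩ := oneSub_key_aux C hCnn hnormC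
  have hA2 : A = α • (1 - C) := by
    rw [hC]
    rw [sub_sub_cancel, smul_smul, mul_inv_cancel₀ hα0.ne', one_smul]
  have hdet : IsUnit (1 - C).det := (Matrix.isUnit_iff_isUnit_det _).mp hU
  have hUA : IsUnit A := by
    rw [hA2, Matrix.isUnit_iff_isUnit_det, Matrix.det_smul]
    exact (isUnit_iff_ne_zero.mpr (pow_ne_zero _ hα0.ne')).mul hdet
  refine ⟨hUA, fun i j => ?_⟩
  have hinvA : A⁻¹ = α⁻¹ • (1 - C)⁻¹ := by
    apply Matrix.inv_eq_right_inv
    rw [hA2, Matrix.smul_mul, Matrix.mul_smul, smul_smul, mul_inv_cancel₀ hα0.ne', one_smul,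
      Matrix.mul_nonsing_inv _ hdet]
  rw [hinvA, Matrix.smul_apply, smul_eq_mul]
  exact mul_nonneg (inv_nonneg.mpr hα0.le) (hpos i j)

end AuxNorm

lemma sum_ite_unique_aux {β : Type*} [Fintype β] (p : β → Prop) [DecidablePred p]
    (hp : ∀ a b, p a → p b → a = b) (c : ℝ) (hc : 0 ≤ c) :
    ∑ a, (if p a then c else 0) ≤ c := by
  rw [Finset.sum_ite, Finset.sum_const, Finset.sum_const_zero, add_zero]
  have hcard : (Finset.univ.filter p).card ≤ 1 :=
    Finset.card_le_one.mpr fun a ha b hb =>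
      hp a b (Finset.mem_filter.mp ha).2 (Finset.mem_filter.mp hb).2
  rcases Nat.le_one_iff_eq_zero_or_eq_one.mp hcard with h0 | h1
  · rw [h0]; simpa using hc
  · rw [h1]; simp

lemma tridT_offdiag (N : ℕ) (h : ℝ) {b d : Fin N} (hbd : b ≠ d) : 0 ≤ tridT N h b d := by
  simp only [tridT, Matrix.of_apply, if_neg hbd]
  split_ifs <;> positivity

lemma tridT_rowsum (N : ℕ) (h : ℝ) (b : Fin N) : ∑ d, |tridT N h b d| ≤ 4 / h ^ 2 := by
  have hps : (0:ℝ) ≤ 1 / h ^ 2 := by positivity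
  have hbound : ∀ d : Fin N, |tridT N h b d|
      ≤ (if d = b then 2 / h ^ 2 else 0) + ((if (b : ℕ) + 1 = (d : ℕ) then 1 / h ^ 2 else 0)
        + (if (d : ℕ) + 1 = (b : ℕ) then 1 / h ^ 2 else 0)) := by
    intro d
    rcases eq_or_ne b d with rfl | hbd
    · rw [tridT_diag, abs_of_nonpos (by rw [neg_div]; exact neg_nonpos.mpr (by positivity)),
        neg_div, neg_neg]
      have e1 : ¬((b : ℕ) + 1 = (b : ℕ)) := by omega
      simp [e1]
    · have h1 : tridT N h b d
          = if (b : ℕ) + 1 = (d : ℕ) ∨ (d : ℕ) + 1 = (b : ℕ) then 1 / h ^ 2 else 0 := by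
        simp [tridT, hbd]
      have hdb : ¬(d = b) := fun hh => hbd hh.symm
      rw [h1, if_neg hdb, zero_add]
      by_cases c1 : (b : ℕ) + 1 = (d : ℕ) <;> by_cases c2 : (d : ℕ) + 1 = (b : ℕ) <;>
        simp [c1, c2, one_div, abs_of_nonneg (show (0:ℝ) ≤ (h ^ 2)⁻¹ by positivity)] <;> linarith [hps]
  calc ∑ d, |tridT N h b d|
      ≤ ∑ d, ((if d = b then 2 / h ^ 2 else 0)
        + ((if (b : ℕ) + 1 = (d : ℕ) then 1 / h ^ 2 else 0)
          + (if (d : ℕ) + 1 = (b : ℕ) then 1 / h ^ 2 else 0))) :=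
        Finset.sum_le_sum fun d _ => hbound d
    _ = (∑ d : Fin N, if d = b then 2 / h ^ 2 else (0:ℝ))
        + ((∑ d : Fin N, if (b : ℕ) + 1 = (d : ℕ) then 1 / h ^ 2 else (0:ℝ))
          + (∑ d : Fin N, if (d : ℕ) + 1 = (b : ℕ) then 1 / h ^ 2 else (0:ℝ))) := by
        rw [Finset.sum_add_distrib, Finset.sum_add_distrib]
    _ ≤ 2 / h ^ 2 + (1 / h ^ 2 + 1 / h ^ 2) := by
        refine add_le_add ?_ (add_le_add ?_ ?_)
        · rw [Finset.sum_ite_eq']; simp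
        · exact sum_ite_unique_aux _ (fun a c ha hc => by apply Fin.ext; omega) _ hps
        · exact sum_ite_unique_aux _ (fun a c ha hc => by apply Fin.ext; omega) _ hps
    _ ≤ 4 / h ^ 2 := by rw [← add_div, ← add_div]; norm_num

lemma Pmat_diag (N : ℕ) (h : ℝ) (i : Fin N × Fin N) : Pmat N h i i = -2 / h ^ 2 := by
  obtain ⟨a, b⟩ := i
  simp [Pmat, Matrix.kroneckerMap_apply, tridT]

lemma Rmat_diag (N : ℕ) (h : ℝ) (i : Fin N × Fin N) : Rmat N h i i = -2 / h ^ 2 := by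
  obtain ⟨a, b⟩ := i
  simp [Rmat, Matrix.kroneckerMap_apply, tridT]

lemma Pmat_offdiag (N : ℕ) (h : ℝ) {i j : Fin N × Fin N} (hij : i ≠ j) : 0 ≤ Pmat N h i j := by
  obtain ⟨a, b⟩ := i; obtain ⟨c, d⟩ := j
  rw [Pmat, Matrix.kroneckerMap_apply]
  by_cases hac : a = c
  · subst hac
    have hbd : b ≠ d := fun hh => hij (by rw [hh])
    rw [Matrix.one_apply_eq, one_mul]
    exact tridT_offdiag N h hbd
  · rw [Matrix.one_apply_ne hac, zero_mul]

lemma Rmat_offdiag (N : ℕ) (h : ℝ) {i j : Fin N × Fin N} (hij : i ≠ j) : 0 ≤ Rmat N h i j := by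
  obtain ⟨a, b⟩ := i; obtain ⟨c, d⟩ := j
  rw [Rmat, Matrix.kroneckerMap_apply]
  by_cases hbd : b = d
  · subst hbd
    have hac : a ≠ c := fun hh => hij (by rw [hh])
    rw [Matrix.one_apply_eq, mul_one]
    exact tridT_offdiag N h hac
  · rw [Matrix.one_apply_ne hbd, mul_zero]

lemma one_abs_row (N : ℕ) (a : Fin N) :
    ∑ c : Fin N, |(1 : Matrix (Fin N) (Fin N) ℝ) a c| = 1 := by
  have hone : ∀ c, |(1 : Matrix (Fin N) (Fin N) ℝ) a c| = if a = c then 1 else 0 := by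
    intro c; rw [Matrix.one_apply]; split_ifs <;> simp
  simp only [hone]
  rw [Finset.sum_ite_eq]; simp

lemma Pmat_rowsum (N : ℕ) (h : ℝ) (i : Fin N × Fin N) :
    ∑ j, |Pmat N h i j| ≤ 4 / h ^ 2 := by
  obtain ⟨a, b⟩ := i
  have hstep : ∑ j, |Pmat N h (a, b) j|
      = (∑ c : Fin N, |(1 : Matrix (Fin N) (Fin N) ℝ) a c|) * ∑ d, |tridT N h b d| := by
    rw [Finset.sum_mul_sum, Fintype.sum_prod_type]
    simp [Pmat, Matrix.kroneckerMap_apply, abs_mul]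
  rw [hstep, one_abs_row, one_mul]
  exact tridT_rowsum N h b

lemma Rmat_rowsum (N : ℕ) (h : ℝ) (i : Fin N × Fin N) :
    ∑ j, |Rmat N h i j| ≤ 4 / h ^ 2 := by
  obtain ⟨a, b⟩ := i
  have hstep : ∑ j, |Rmat N h (a, b) j|
      = (∑ c : Fin N, |tridT N h a c|) * ∑ d : Fin N, |(1 : Matrix (Fin N) (Fin N) ℝ) b d| := by
    rw [Finset.sum_mul_sum, Fintype.sum_prod_type]
    simp [Rmat, Matrix.kroneckerMap_apply, abs_mul]
  rw [hstep, one_abs_row, mul_one]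
  exact tridT_rowsum N h a

/-- (Theorem 3.1, part) If `v ≥ 0` entrywise, `τ > 0` and
`τ/h² < 1/(2·max{1, maxᵢ vᵢ})`, then `I - (τ/2)·P·D(v)` and `I - (τ/2)·R·D(v)` are
nonsingular and inverse positive (their inverses are entrywise nonnegative). -/
theorem stmt6 (N : ℕ) (hN : 1 ≤ N) (h : ℝ) (hh : h = 1 / (N + 1))
    (v : Fin N × Fin N → ℝ) (hv : ∀ i, 0 ≤ v i)
    (τ : ℝ) (hτ0 : 0 < τ) (hτ : τ / h ^ 2 < 1 / (2 * max 1 (⨆ i, v i))) :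
    IsUnit (1 - (τ / 2) • (Pmat N h * Matrix.diagonal v)) ∧
      (∀ i j, 0 ≤ (1 - (τ / 2) • (Pmat N h * Matrix.diagonal v))⁻¹ i j) ∧
    IsUnit (1 - (τ / 2) • (Rmat N h * Matrix.diagonal v)) ∧
      (∀ i j, 0 ≤ (1 - (τ / 2) • (Rmat N h * Matrix.diagonal v))⁻¹ i j) := by
  haveI : NeZero N := ⟨by omega⟩
  have hhpos : 0 < h := by
    rw [hh]; positivity
  have hh2 : (0:ℝ) < h ^ 2 := by positivity
  set s : ℝ := max 1 (⨆ i, v i) with hs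
  have hs1 : 1 ≤ s := le_max_left _ _
  have hs0 : 0 < s := lt_of_lt_of_le one_pos hs1
  have hvs : ∀ i, v i ≤ s := fun i =>
    le_trans (le_ciSup (Set.Finite.bddAbove (Set.finite_range v)) i) (le_max_right _ _)
  have hτ' : τ * s / h ^ 2 < 1 / 2 := by
    have h1 : τ / h ^ 2 * s < 1 / (2 * s) * s := mul_lt_mul_of_pos_right hτ hs0
    have h2 : 1 / (2 * s) * s = 1 / 2 := by field_simp
    have h3 : τ / h ^ 2 * s = τ * s / h ^ 2 := by ring
    rw [h2, h3] at h1
    exact h1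
  obtain ⟨hU1, hpos1⟩ := main_aux (Pmat N h) v hv (h ^ 2) hh2
    (fun i => (Pmat_diag N h i).ge) (fun i j hij => Pmat_offdiag N h hij)
    (Pmat_rowsum N h) s hs1 hvs τ hτ0 hτ'
  obtain ⟨hU2, hpos2⟩ := main_aux (Rmat N h) v hv (h ^ 2) hh2
    (fun i => (Rmat_diag N h i).ge) (fun i j hij => Rmat_offdiag N h hij)
    (Rmat_rowsum N h) s hs1 hvs τ hτ0 hτ'
  exact ⟨hU1, hpos1, hU2, hpos2⟩
end
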